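/- arXiv:2205.07013 — 3 statements merged into one kernel-verified Lean document; each statement's English description precedes it below -/
import Mathlib

section
/- For a, γ > 0 and f_± := φ ± i γ T_{1/a} φ (where T_x denotes translation by x and φ is the normalized Gaussian), the Gabor transforms satisfy |𝒢f_±(x,ω)| = e^{-π(x²+ω²)/2} · |1 ± i γ e^{(π/a)(x - iω)} e^{-π/(2a²)}| for all (x,ω) ∈ ℝ². -/
open MeasureTheory

/-- The Gabor transform with Gaussian window. -/
noncomputable def gabor (f : ℝ → ℂ) (x ω : ℝ) : ℂ :=
  (2 : ℂ) ^ ((1 : ℂ) / 4) *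
    ∫ t : ℝ, f t * Complex.exp (-(Real.pi : ℂ) * ((t : ℂ) - (x : ℂ)) ^ 2) *
      Complex.exp (-2 * (Real.pi : ℂ) * Complex.I * (t : ℂ) * (ω : ℂ))

/-- The normalized Gaussian φ(t) = 2^{1/4} e^{-π t²}. -/
noncomputable def gauss (t : ℝ) : ℂ :=
  (2 : ℂ) ^ ((1 : ℂ) / 4) * Complex.exp (-(Real.pi : ℂ) * (t : ℂ) ^ 2)

/-!
The Gabor transform is linear on `L¹` and turns translation by `y` into translation in `x`
times the phase `e^{-2πiyω}`, while the transform of the Gaussian is a Gaussian integral,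
`𝒢φ(x,ω) = e^{-πixω} e^{-π(x²+ω²)/2}`. Hence
`𝒢f_±(x,ω) = 𝒢φ(x,ω) ± iγ e^{-2πiω/a} 𝒢φ(x - 1/a, ω)`
`          = 𝒢φ(x,ω) (1 ± iγ e^{(π/a)(x-iω)} e^{-π/(2a²)})`,
and `|𝒢φ(x,ω)| = e^{-π(x²+ω²)/2}`.
-/

open Complex Real

lemma norm_gabor_window_le_one (x ω t : ℝ) :
    ‖cexp (-(π : ℂ) * ((t : ℂ) - x) ^ 2) * cexp (-2 * π * I * t * ω)‖ ≤ 1 := by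
  rw [norm_mul, Complex.norm_exp, Complex.norm_exp]
  have hgauss : (-(π : ℂ) * ((t : ℂ) - x) ^ 2).re = -π * (t - x) ^ 2 := by
    rw [← ofReal_sub, ← ofReal_pow, ← ofReal_neg, ← ofReal_mul, ofReal_re]
  have hphase : (-2 * (π : ℂ) * I * t * ω).re = 0 := by simp
  rw [hgauss, hphase, Real.exp_zero, mul_one, Real.exp_le_one_iff]
  exact mul_nonpos_of_nonpos_of_nonneg (neg_nonpos.mpr pi_pos.le) (sq_nonneg _)

lemma integrable_mul_gabor_window {f : ℝ → ℂ} (hf : Integrable f) (x ω : ℝ) :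
    Integrable fun t : ℝ => f t * cexp (-(π : ℂ) * ((t : ℂ) - x) ^ 2) *
      cexp (-2 * π * I * t * ω) :=
  (hf.mul_bdd (by fun_prop) (.of_forall (norm_gabor_window_le_one x ω))).congr
    (.of_forall fun _ => (mul_assoc _ _ _).symm)

lemma gabor_add_const_mul {f g : ℝ → ℂ} (hf : Integrable f) (hg : Integrable g) (c : ℂ)
    (x ω : ℝ) : gabor (fun t => f t + c * g t) x ω = gabor f x ω + c * gabor g x ω := by
  have hcg := (integrable_mul_gabor_window hg x ω).const_mul c
  simp only [gabor, add_mul, mul_assoc c]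
  rw [integral_add (integrable_mul_gabor_window hf x ω) hcg, integral_const_mul]
  ring

lemma gabor_comp_sub (f : ℝ → ℂ) (y x ω : ℝ) :
    gabor (fun t => f (t - y)) x ω = cexp (-2 * π * I * y * ω) * gabor f (x - y) ω := by
  simp only [gabor]
  rw [mul_left_comm]
  congr 1
  rw [← integral_const_mul, ← integral_add_right_eq_self _ y]
  congr 1 with s
  have hphase : cexp (-2 * π * I * ↑(s + y) * ω) =
      cexp (-2 * π * I * y * ω) * cexp (-2 * π * I * s * ω) := by
    rw [← Complex.exp_add]; push_cast; ring_nf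
  rw [hphase, add_sub_cancel_right]
  push_cast
  ring_nf

lemma integrable_gauss : Integrable gauss := by
  refine ((integrable_cexp_quadratic (b := π) (by simp [pi_pos]) 0 0).const_mul
    ((2 : ℂ) ^ (1 / 4 : ℂ))).congr (.of_forall fun t => ?_)
  simp [gauss]

lemma gauss_mul_gabor_window (x ω t : ℝ) :
    gauss t * cexp (-(π : ℂ) * ((t : ℂ) - x) ^ 2) * cexp (-2 * π * I * t * ω) =
      (2 : ℂ) ^ (1 / 4 : ℂ) *
        cexp (-(2 * π) * t ^ 2 + 2 * π * (x - I * ω) * t + -π * x ^ 2) := by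
  simp only [gauss, mul_assoc, ← Complex.exp_add]
  ring_nf

lemma two_cpow_quarter_mul_self_mul_inv_cpow_half :
    (2 : ℂ) ^ (1 / 4 : ℂ) * (2 : ℂ) ^ (1 / 4 : ℂ) * (2⁻¹ : ℂ) ^ (1 / 2 : ℂ) = 1 := by
  rw [Complex.inv_cpow _ _ (by simp [pi_ne_zero.symm]), ← Complex.cpow_add _ _ two_ne_zero]
  norm_num

lemma gabor_gauss (x ω : ℝ) :
    gabor gauss x ω = cexp (-π * I * x * ω) * Real.exp (-π / 2 * (x ^ 2 + ω ^ 2)) := by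
  simp only [gabor, gauss_mul_gabor_window]
  rw [integral_const_mul, integral_cexp_quadratic (by simp [pi_pos])]
  have hπ : (π : ℂ) ≠ 0 := ofReal_ne_zero.mpr pi_ne_zero
  have hvariance : (π : ℂ) / -(-(2 * π)) = 2⁻¹ := by field_simp
  rw [hvariance, ← mul_assoc, ← mul_assoc, two_cpow_quarter_mul_self_mul_inv_cpow_half, one_mul,
    ofReal_exp, ← Complex.exp_add]
  congr 1
  push_cast
  field_simp
  ring_nf
  simp only [I_sq]
  ring

lemma norm_gabor_gauss (x ω : ℝ) :
    ‖gabor gauss x ω‖ = Real.exp (-π / 2 * (x ^ 2 + ω ^ 2)) := by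
  rw [gabor_gauss, norm_mul, Complex.norm_exp, Complex.norm_real, Real.norm_eq_abs,
    abs_of_pos (Real.exp_pos _)]
  simp

lemma gabor_gauss_comp_sub (y x ω : ℝ) :
    gabor (fun t => gauss (t - y)) x ω =
      gabor gauss x ω * (cexp (π * y * (x - I * ω)) * Real.exp (-π * y ^ 2 / 2)) := by
  rw [gabor_comp_sub, gabor_gauss, gabor_gauss]
  simp only [ofReal_exp, ← Complex.exp_add]
  congr 1
  push_cast
  ring

theorem gabor_counterexample_magnitude_general (a γ : ℝ)
    (ε : ℝ) (f : ℝ → ℂ)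
    (hf : f = fun t => gauss t + (ε : ℂ) * Complex.I * (γ : ℂ) * gauss (t - 1 / a)) :
    ∀ x ω : ℝ,
      ‖gabor f x ω‖ =
        Real.exp (-Real.pi / 2 * (x ^ 2 + ω ^ 2)) *
          ‖(1 + (ε : ℂ) * Complex.I * (γ : ℂ) *
              Complex.exp (((Real.pi : ℂ) / (a : ℂ)) * ((x : ℂ) - Complex.I * (ω : ℂ))) *
              (Real.exp (-Real.pi / (2 * a ^ 2)) : ℂ))‖ := by
  intro x ω
  rw [hf, gabor_add_const_mul integrable_gauss (integrable_gauss.comp_sub_right _),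
    gabor_gauss_comp_sub, ← norm_gabor_gauss x ω, ← norm_mul]
  congr 1
  push_cast
  ring_nf

/-- |𝒢f_±(x,ω)| = e^{-π(x²+ω²)/2} |1 ± iγ e^{(π/a)(x-iω)} e^{-π/(2a²)}|, where
f_± = φ ± iγ T_{1/a} φ and ε = ±1 encodes the sign. -/
theorem gabor_counterexample_magnitude (a γ : ℝ) (ha : 0 < a) (hγ : 0 < γ)
    (ε : ℝ) (hε : ε = 1 ∨ ε = -1) (f : ℝ → ℂ)
    (hf : f = fun t => gauss t + (ε : ℂ) * Complex.I * (γ : ℂ) * gauss (t - 1 / a)) :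
    ∀ x ω : ℝ,
      ‖gabor f x ω‖ =
        Real.exp (-Real.pi / 2 * (x ^ 2 + ω ^ 2)) *
          ‖(1 + (ε : ℂ) * Complex.I * (γ : ℂ) *
              Complex.exp (((Real.pi : ℂ) / (a : ℂ)) * ((x : ℂ) - Complex.I * (ω : ℂ))) *
              (Real.exp (-Real.pi / (2 * a ^ 2)) : ℂ))‖ :=
  gabor_counterexample_magnitude_general a γ ε f hf
end

section
/- For a, γ > 0 and f_± := φ ± i γ T_{1/a} φ, it holds that |𝒢f_+(x, a k)| = |𝒢f_-(x, a k)| for every x ∈ ℝ and k ∈ ℤ; that is, the Gabor transform magnitudes of f_+ and f_- agree on all of ℝ × aℤ. -/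
open MeasureTheory

/-! The Gabor transform of a translated Gaussian is a Gaussian integral,
`𝒢(T_d φ)(x, ω) = e^{-π((x-d)² + ω²)/2} e^{-πi(x+d)ω}`. When `dω = k ∈ ℤ` the phase differs from
that of `𝒢φ` by the real sign `e^{-πik} = (-1)^k`, so `𝒢(φ ± iγ T_d φ)(x, ω) = e^{-πixω} (p ± iγ q)`
with `p, q` real: the two values in brackets are complex conjugates and have the same modulus. -/

open Complex Real ComplexConjugate

lemma gabor_const_mul (c : ℂ) (f : ℝ → ℂ) (x ω : ℝ) :
    gabor (fun t => c * f t) x ω = c * gabor f x ω := by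
  simp only [gabor, mul_assoc, integral_const_mul]
  ring

lemma gabor_add {f g : ℝ → ℂ} {x ω : ℝ}
    (hf : Integrable fun t : ℝ => f t * cexp (-(π : ℂ) * ((t : ℂ) - x) ^ 2) *
      cexp (-2 * (π : ℂ) * I * t * ω))
    (hg : Integrable fun t : ℝ => g t * cexp (-(π : ℂ) * ((t : ℂ) - x) ^ 2) *
      cexp (-2 * (π : ℂ) * I * t * ω)) :
    gabor (fun t => f t + g t) x ω = gabor f x ω + gabor g x ω := by
  simp only [gabor, add_mul, integral_add hf hg, mul_add]

lemma gauss_sub_mul_window (d x ω t : ℝ) :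
    gauss (t - d) * cexp (-(π : ℂ) * ((t : ℂ) - x) ^ 2) * cexp (-2 * (π : ℂ) * I * t * ω) =
      (2 : ℂ) ^ ((1 : ℂ) / 4) *
        cexp (-(2 * π) * (t : ℂ) ^ 2 + 2 * π * (x + d - I * ω) * t + -(π * (x ^ 2 + d ^ 2))) := by
  simp only [gauss, mul_assoc, ← Complex.exp_add]
  push_cast
  ring_nf

lemma integrable_gauss_sub_mul_window (d x ω : ℝ) :
    Integrable fun t : ℝ => gauss (t - d) * cexp (-(π : ℂ) * ((t : ℂ) - x) ^ 2) *
      cexp (-2 * (π : ℂ) * I * t * ω) := by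
  simp_rw [gauss_sub_mul_window]
  exact (integrable_cexp_quadratic (by simp [pi_pos]) _ _).const_mul _

lemma two_cpow_quarter_mul_two_cpow_quarter_mul_half_cpow_half :
    (2 : ℂ) ^ ((1 : ℂ) / 4) * (2 : ℂ) ^ ((1 : ℂ) / 4) * (2⁻¹ : ℂ) ^ ((1 : ℂ) / 2) = 1 := by
  have harg : (2 : ℂ).arg ≠ π := by
    rw [show (2 : ℂ) = ((2 : ℝ) : ℂ) by norm_num, arg_ofReal_of_nonneg zero_le_two]
    exact pi_ne_zero.symm
  rw [← cpow_add _ _ two_ne_zero, inv_cpow _ _ harg]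
  norm_num

lemma gabor_gauss_sub (d x ω : ℝ) :
    gabor (fun t => gauss (t - d)) x ω =
      (Real.exp (-π * ((x - d) ^ 2 + ω ^ 2) / 2) : ℂ) * cexp (-(π * I * (x + d) * ω)) := by
  simp_rw [gabor, gauss_sub_mul_window, integral_const_mul]
  rw [integral_cexp_quadratic (by simp [pi_pos]), ← mul_assoc, ← mul_assoc,
    show (π : ℂ) / -(-(2 * π)) = 2⁻¹ by field_simp [ofReal_ne_zero.mpr pi_ne_zero],
    two_cpow_quarter_mul_two_cpow_quarter_mul_half_cpow_half, one_mul, ofReal_exp,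
    ← Complex.exp_add]
  congr 1
  field_simp [ofReal_ne_zero.mpr pi_ne_zero]
  push_cast
  linear_combination (2 * π * ω ^ 2 : ℂ) * I_sq

lemma cexp_neg_pi_mul_I_mul_int (k : ℤ) : cexp (-(π * I * k)) = ((-1 : ℝ) ^ k : ℝ) := by
  rw [show -(π * I * k) = k * -(π * I) by ring, exp_int_mul, Complex.exp_neg, exp_pi_mul_I]
  push_cast
  rw [inv_neg, inv_one]

lemma gabor_gauss_add_mul_gauss_sub {d ω : ℝ} {k : ℤ} (hk : d * ω = k) (c : ℂ) (x : ℝ) :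
    gabor (fun t => gauss t + c * gauss (t - d)) x ω =
      cexp (-(π * I * x * ω)) * ((Real.exp (-π * (x ^ 2 + ω ^ 2) / 2) : ℂ) +
        c * (((-1 : ℝ) ^ k * Real.exp (-π * ((x - d) ^ 2 + ω ^ 2) / 2) : ℝ) : ℂ)) := by
  have hk' : (d : ℂ) * ω = k := by exact_mod_cast hk
  have hφ := gabor_gauss_sub 0 x ω
  have hφint := integrable_gauss_sub_mul_window 0 x ω
  simp only [sub_zero, ofReal_zero, add_zero] at hφ hφint
  rw [gabor_add hφint
      (by simpa only [mul_assoc] using (integrable_gauss_sub_mul_window d x ω).const_mul c),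
    gabor_const_mul, hφ, gabor_gauss_sub,
    show -(π * I * (x + d) * ω) = -(π * I * x * ω) + -(π * I * k) by rw [← hk']; ring,
    Complex.exp_add, cexp_neg_pi_mul_I_mul_int]
  push_cast
  ring

lemma norm_ofReal_add_conj_mul_ofReal (p q : ℝ) (c : ℂ) :
    ‖(p : ℂ) + conj c * q‖ = ‖(p : ℂ) + c * q‖ := by
  rw [← norm_conj, map_add, map_mul, conj_conj, conj_ofReal, conj_ofReal]

theorem gabor_counterexample_agree_on_lines_general (a γ : ℝ) (ha : 0 < a)
    (fplus fminus : ℝ → ℂ)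
    (hplus : fplus = fun t => gauss t + Complex.I * (γ : ℂ) * gauss (t - 1 / a))
    (hminus : fminus = fun t => gauss t - Complex.I * (γ : ℂ) * gauss (t - 1 / a)) :
    ∀ (x : ℝ) (k : ℤ),
      ‖gabor fplus x (a * k)‖ = ‖gabor fminus x (a * k)‖ := by
  intro x k
  have hk : 1 / a * (a * k) = k := by field_simp
  have hminus' : fminus = fun t => gauss t + conj (I * γ) * gauss (t - 1 / a) := by
    simp [hminus, sub_eq_add_neg]
  rw [hplus, hminus', gabor_gauss_add_mul_gauss_sub hk, gabor_gauss_add_mul_gauss_sub hk,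
    norm_mul, norm_mul, norm_ofReal_add_conj_mul_ofReal]

/-- The Gabor magnitudes of f_+ = φ + iγ T_{1/a} φ and f_- = φ - iγ T_{1/a} φ agree
on all of ℝ × aℤ. -/
theorem gabor_counterexample_agree_on_lines (a γ : ℝ) (ha : 0 < a) (hγ : 0 < γ)
    (fplus fminus : ℝ → ℂ)
    (hplus : fplus = fun t => gauss t + Complex.I * (γ : ℂ) * gauss (t - 1 / a))
    (hminus : fminus = fun t => gauss t - Complex.I * (γ : ℂ) * gauss (t - 1 / a)) :
    ∀ (x : ℝ) (k : ℤ),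
      ‖gabor fplus x (a * k)‖ = ‖gabor fminus x (a * k)‖ :=
  gabor_counterexample_agree_on_lines_general a γ ha fplus fminus hplus hminus
end

section
/- Let a > 0, let Ω ⊂ ℝ² be a bounded set contained in the strip (-R,R) × ℝ, and let 0 < δ < 1. If 0 < γ < δ e^{-(π/a)(R - 1/(2a))}, then for all (x,ω) ∈ Ω, (1-δ)^p |𝒢φ(x,ω)|^p ≤ |𝒢f_±(x,ω)|^p ≤ (1+δ)^p |𝒢φ(x,ω)|^p, where f_± = φ ± i γ T_{1/a} φ. -/
/-! The Gabor transform of a translated Gaussian is again an explicit Gaussian, and comparing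
exponents gives 𝒢(T_s φ)(x,ω) = 𝒢φ(x,ω) · e^{πsx - πs²/2 - iπsω}. Hence 𝒢f_± = 𝒢φ · (1 + z)
with |z| = γ e^{(π/a)x - π/(2a²)}, which the hypothesis on γ bounds by δ as long as x ≤ R; the
triangle inequality for 1 + z then gives both bounds. -/

open MeasureTheory

open Complex Real

section GaussianWindow

variable (s x ω : ℝ)

lemma gauss_translate_mul_kernel_eq (t : ℝ) :
    gauss (t - s) * cexp (-π * ((t : ℂ) - x) ^ 2) * cexp (-2 * π * I * t * ω) =
      2 ^ ((1 : ℂ) / 4) *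
        cexp (-2 * π * (t : ℂ) ^ 2 + 2 * π * (s + x - ω * I) * t + -π * (s ^ 2 + x ^ 2)) := by
  simp only [gauss, mul_assoc, ← Complex.exp_add]
  congr 2
  push_cast
  ring

lemma integrable_gauss_translate_mul_kernel :
    Integrable fun t : ℝ =>
      gauss (t - s) * cexp (-π * ((t : ℂ) - x) ^ 2) * cexp (-2 * π * I * t * ω) := by
  simp_rw [gauss_translate_mul_kernel_eq]
  exact (integrable_cexp_quadratic' (b := -2 * π) (by simp [pi_pos]) _ _).const_mul _

lemma gabor_gauss_translate :
    gabor (fun t => gauss (t - s)) x ω =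
      2 ^ ((1 : ℂ) / 4) * 2 ^ ((1 : ℂ) / 4) * (1 / 2) ^ ((1 : ℂ) / 2) *
        cexp (π / 2 * ((s + x - ω * I) ^ 2 - 2 * s ^ 2 - 2 * x ^ 2)) := by
  have hπ : (π : ℂ) ≠ 0 := by exact_mod_cast Real.pi_ne_zero
  simp_rw [gabor, gauss_translate_mul_kernel_eq]
  rw [integral_const_mul, integral_cexp_quadratic (b := -2 * π) (by simp [pi_pos])]
  have hconst : (π : ℂ) / -(-2 * π) = 1 / 2 := by field_simp
  have hexp : -π * (s ^ 2 + x ^ 2) - (2 * π * (s + x - ω * I)) ^ 2 / (4 * (-2 * π)) =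
      π / 2 * ((s + x - ω * I) ^ 2 - 2 * s ^ 2 - 2 * x ^ 2) := by
    field_simp
    ring
  rw [hconst, hexp]
  ring

lemma gabor_gauss_translate_eq_mul :
    gabor (fun t => gauss (t - s)) x ω =
      gabor gauss x ω * cexp (π * s * x - π * s ^ 2 / 2 - π * s * ω * I) := by
  have h := gabor_gauss_translate 0 x ω
  simp only [ofReal_zero, sub_zero] at h
  rw [gabor_gauss_translate, h, mul_assoc _ (cexp _), ← Complex.exp_add]
  congr 2
  ring

lemma gabor_gauss_add_translate (c : ℂ) :
    gabor (fun t => gauss t + c * gauss (t - s)) x ω =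
      gabor gauss x ω * (1 + c * cexp (π * s * x - π * s ^ 2 / 2 - π * s * ω * I)) := by
  have h0 := integrable_gauss_translate_mul_kernel 0 x ω
  simp only [sub_zero] at h0
  have hs := (integrable_gauss_translate_mul_kernel s x ω).const_mul c
  have hlin : gabor (fun t => gauss t + c * gauss (t - s)) x ω =
      gabor gauss x ω + c * gabor (fun t => gauss (t - s)) x ω := by
    have hint : ∫ t : ℝ, (gauss t + c * gauss (t - s)) * cexp (-π * ((t : ℂ) - x) ^ 2) *
          cexp (-2 * π * I * t * ω) =
        (∫ t : ℝ, gauss t * cexp (-π * ((t : ℂ) - x) ^ 2) * cexp (-2 * π * I * t * ω)) +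
          ∫ t : ℝ, c * (gauss (t - s) * cexp (-π * ((t : ℂ) - x) ^ 2) *
            cexp (-2 * π * I * t * ω)) := by
      rw [← integral_add h0 hs]
      congr 1 with t
      ring
    simp only [gabor, hint, integral_const_mul]
    ring
  rw [hlin, gabor_gauss_translate_eq_mul]
  ring

lemma norm_mul_cexp_translate_factor (c : ℂ) :
    ‖c * cexp (π * s * x - π * s ^ 2 / 2 - π * s * ω * I)‖ =
      ‖c‖ * rexp (π * s * x - π * s ^ 2 / 2) := by
  rw [norm_mul, Complex.norm_exp]
  congr 2
  norm_num [sub_re, mul_re, div_ofNat_re, ← ofReal_pow]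

end GaussianWindow

lemma mul_exp_le_of_le_of_lt {a R δ γ x : ℝ} (ha : 0 < a) (hδ : 0 ≤ δ) (hx : x ≤ R)
    (hγ : γ < δ * rexp (-(π / a) * (R - 1 / (2 * a)))) :
    γ * rexp (π * (1 / a) * x - π * (1 / a) ^ 2 / 2) ≤ δ := by
  have hexp : -(π / a) * (R - 1 / (2 * a)) + (π * (1 / a) * x - π * (1 / a) ^ 2 / 2) =
      π / a * (x - R) := by
    field_simp
    ring
  have hle : rexp (π / a * (x - R)) ≤ 1 :=
    exp_le_one_iff.mpr (mul_nonpos_of_nonneg_of_nonpos (by positivity) (by linarith))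
  calc γ * rexp (π * (1 / a) * x - π * (1 / a) ^ 2 / 2)
      ≤ δ * rexp (-(π / a) * (R - 1 / (2 * a))) * rexp (π * (1 / a) * x - π * (1 / a) ^ 2 / 2) :=
        mul_le_mul_of_nonneg_right hγ.le (exp_pos _).le
    _ = δ * rexp (π / a * (x - R)) := by rw [mul_assoc, ← Real.exp_add, hexp]
    _ ≤ δ := mul_le_of_le_one_right hδ hle

lemma rpow_norm_mul_one_add_bounds {𝕜 : Type*} [NormedDivisionRing 𝕜] {g z : 𝕜} {δ p : ℝ}
    (hz : ‖z‖ ≤ δ) (hδ : δ ≤ 1) (hp : 0 ≤ p) :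
    (1 - δ) ^ p * ‖g‖ ^ p ≤ ‖g * (1 + z)‖ ^ p ∧ ‖g * (1 + z)‖ ^ p ≤ (1 + δ) ^ p * ‖g‖ ^ p := by
  have hlo : 1 - δ ≤ ‖1 + z‖ := by
    have := norm_sub_norm_le (1 : 𝕜) (-z)
    rw [norm_one, norm_neg, sub_neg_eq_add] at this
    linarith
  have hhi : ‖1 + z‖ ≤ 1 + δ := (norm_add_le _ _).trans (by rw [norm_one]; linarith)
  rw [norm_mul, ← mul_rpow (by linarith) (norm_nonneg g), ← mul_rpow (by linarith) (norm_nonneg g),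
    mul_comm ‖g‖]
  exact ⟨by gcongr, by gcongr⟩

theorem gabor_counterexample_weight_comparison_general (a R δ γ p : ℝ) (ha : 0 < a)
    (hδ0 : 0 < δ) (hδ1 : δ < 1) (hp : 1 ≤ p)
    (Ω : Set (ℝ × ℝ))
    (hΩs : Ω ⊆ Set.Ioo (-R) R ×ˢ (Set.univ : Set ℝ))
    (hγ0 : 0 < γ) (hγ : γ < δ * Real.exp (-(Real.pi / a) * (R - 1 / (2 * a))))
    (ε : ℝ) (hε : ε = 1 ∨ ε = -1) (f : ℝ → ℂ)
    (hf : f = fun t => gauss t + (ε : ℂ) * Complex.I * (γ : ℂ) * gauss (t - 1 / a)) :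
    ∀ x ω : ℝ, (x, ω) ∈ Ω →
      (1 - δ) ^ p * ‖gabor gauss x ω‖ ^ p ≤ ‖gabor f x ω‖ ^ p ∧
        ‖gabor f x ω‖ ^ p ≤ (1 + δ) ^ p * ‖gabor gauss x ω‖ ^ p := by
  intro x ω hxω
  have hcoeff : ‖(ε : ℂ) * I * γ‖ = γ := by
    rcases hε with rfl | rfl <;> simp [abs_of_pos hγ0]
  have hweight : ‖(ε : ℂ) * I * γ *
      cexp (π * (1 / a : ℝ) * x - π * (1 / a : ℝ) ^ 2 / 2 - π * (1 / a : ℝ) * ω * I)‖ ≤ δ := by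
    rw [norm_mul_cexp_translate_factor, hcoeff]
    exact mul_exp_le_of_le_of_lt ha hδ0.le (hΩs hxω).1.2.le hγ
  rw [hf, gabor_gauss_add_translate]
  exact rpow_norm_mul_one_add_bounds hweight hδ1.le (by linarith)

/-- If 0 < γ < δ e^{-(π/a)(R - 1/(2a))} with 0 < δ < 1, then on any bounded Ω contained in
the strip (-R,R) × ℝ: (1-δ)^p |𝒢φ|^p ≤ |𝒢f_±|^p ≤ (1+δ)^p |𝒢φ|^p. -/
theorem gabor_counterexample_weight_comparison (a R δ γ p : ℝ) (ha : 0 < a)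
    (hδ0 : 0 < δ) (hδ1 : δ < 1) (hp : 1 ≤ p)
    (Ω : Set (ℝ × ℝ)) (hΩb : Bornology.IsBounded Ω)
    (hΩs : Ω ⊆ Set.Ioo (-R) R ×ˢ (Set.univ : Set ℝ))
    (hγ0 : 0 < γ) (hγ : γ < δ * Real.exp (-(Real.pi / a) * (R - 1 / (2 * a))))
    (ε : ℝ) (hε : ε = 1 ∨ ε = -1) (f : ℝ → ℂ)
    (hf : f = fun t => gauss t + (ε : ℂ) * Complex.I * (γ : ℂ) * gauss (t - 1 / a)) :
    ∀ x ω : ℝ, (x, ω) ∈ Ω →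
      (1 - δ) ^ p * ‖gabor gauss x ω‖ ^ p ≤ ‖gabor f x ω‖ ^ p ∧
        ‖gabor f x ω‖ ^ p ≤ (1 + δ) ^ p * ‖gabor gauss x ω‖ ^ p :=
  gabor_counterexample_weight_comparison_general a R δ γ p ha hδ0 hδ1 hp Ω hΩs hγ0 hγ ε hε f hf
end
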